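/- arXiv:1812.07079 — 4 statements merged into one kernel-verified Lean document; each statement's English description precedes it below -/
import Mathlib

section
/- Soundness and completeness for NDMs: A formula φ ∈ L is derivable in the logic LDA if and only if φ is valid for the class of notional doxastic models. -/
namespace LDAPaper

/-- Formulas over atomic propositions `ℕ` and agents `Agt`.
`expbel i α` is the explicit belief operator `△ᵢ α`; `impbel i φ` is the implicit
belief operator `□ᵢ φ`. -/
inductive Frm (Agt : Type) : Type
  | atom : ℕ → Frm Agt
  | neg : Frm Agt → Frm Agt
  | and : Frm Agt → Frm Agt → Frm Agt
  | expbel : Agt → Frm Agt → Frm Agt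
  | impbel : Agt → Frm Agt → Frm Agt

namespace Frm

variable {Agt : Type}

/-- Membership in the sublanguage `L0` (no implicit-belief operator). -/
def isL0 : Frm Agt → Prop
  | atom _ => True
  | neg α => isL0 α
  | and α β => isL0 α ∧ isL0 β
  | expbel _ α => isL0 α
  | impbel _ _ => False

/-- Membership in the language `L`: the explicit belief operator applies only to
`L0`-formulas. -/
def isL : Frm Agt → Prop
  | atom _ => True
  | neg φ => isL φ
  | and φ ψ => isL φ ∧ isL ψ
  | expbel _ α => isL0 α
  | impbel _ φ => isL φ

/-- Material implication, defined from `¬` and `∧` as usual. -/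
def imp (φ ψ : Frm Agt) : Frm Agt := neg (and φ (neg ψ))

/-- Disjunction, defined from `¬` and `∧` as usual. -/
def or (φ ψ : Frm Agt) : Frm Agt := neg (and (neg φ) (neg ψ))

/-- Biconditional, defined from `¬` and `∧` as usual. -/
def iff (φ ψ : Frm Agt) : Frm Agt := and (imp φ ψ) (imp ψ φ)

/-- The set of atomic propositions occurring in a formula. -/
def atomsOf : Frm Agt → Set ℕ
  | atom p => {p}
  | neg φ => atomsOf φ
  | and φ ψ => atomsOf φ ∪ atomsOf ψ
  | expbel _ φ => atomsOf φ
  | impbel _ φ => atomsOf φ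

end Frm

/-- A model `(W, D, N, V)`: worlds, doxastic function, notional function, valuation. -/
structure PreNDM (Agt : Type) where
  W : Type
  D : Agt → W → Set (Frm Agt)
  N : Agt → W → Set W
  V : ℕ → Set W

namespace PreNDM

variable {Agt : Type}

/-- Truth of a formula at a world of a model. -/
def sat (M : PreNDM Agt) : M.W → Frm Agt → Prop
  | w, .atom p => w ∈ M.V p
  | w, .neg φ => ¬ sat M w φ
  | w, .and φ ψ => sat M w φ ∧ sat M w ψ
  | w, .expbel i α => α ∈ M.D i w
  | w, .impbel i φ => ∀ v ∈ M.N i w, sat M v φ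

end PreNDM

/-- Quasi-notional doxastic model: belief bases consist of `L0`-formulas,
(C1*) `N(i,w) ⊆ ∩_{α ∈ D(i,w)} ‖α‖`, and (C2) `N(i,w) ≠ ∅`. -/
def isQNDM {Agt : Type} (M : PreNDM Agt) : Prop :=
  (∀ i w, ∀ α ∈ M.D i w, α.isL0) ∧
  (∀ i w, ∀ v ∈ M.N i w, ∀ α ∈ M.D i w, M.sat v α) ∧
  (∀ i w, (M.N i w).Nonempty)

/-- Notional doxastic model: belief bases consist of `L0`-formulas,
(C1) `N(i,w) = ∩_{α ∈ D(i,w)} ‖α‖`, and (C2) `N(i,w) ≠ ∅`. -/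
def isNDM {Agt : Type} (M : PreNDM Agt) : Prop :=
  (∀ i w, ∀ α ∈ M.D i w, α.isL0) ∧
  (∀ i w, M.N i w = {v | ∀ α ∈ M.D i w, M.sat v α}) ∧
  (∀ i w, (M.N i w).Nonempty)

/-- A model is finite iff `W` is finite and every `D(i,w)` and every
`{p ∈ Atm : w ∈ V(p)}` is finite. -/
def finiteModel {Agt : Type} (M : PreNDM Agt) : Prop :=
  Finite M.W ∧ (∀ i w, (M.D i w).Finite) ∧ (∀ w, {p : ℕ | w ∈ M.V p}.Finite)

end LDAPaper
namespace LDAPaper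

/-- A multi-agent belief base `B = (B_1,…,B_n, V)`. -/
structure MABase (Agt : Type) where
  B : Agt → Set (Frm Agt)
  V : Set ℕ

namespace MABase

variable {Agt : Type}

/-- Satisfaction of `L0`-formulas by a multi-agent belief base. -/
def bsat (b : MABase Agt) : Frm Agt → Prop
  | .atom p => p ∈ b.V
  | .neg α => ¬ bsat b α
  | .and α β => bsat b α ∧ bsat b β
  | .expbel i α => α ∈ b.B i
  | .impbel _ _ => True

/-- Well-formedness: each agent's belief base consists of `L0`-formulas. -/
def wf (b : MABase Agt) : Prop := ∀ i, ∀ α ∈ b.B i, α.isL0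

/-- Doxastic alternative relation: `b R_i b'` iff `b'` satisfies every formula in
agent `i`'s belief base in `b`. -/
def R (i : Agt) (b b' : MABase Agt) : Prop := ∀ α ∈ b.B i, bsat b' α

end MABase

/-- Satisfaction of `L`-formulas by a multi-agent belief model `(b, Cxt)`. -/
def msat {Agt : Type} (Cxt : Set (MABase Agt)) : MABase Agt → Frm Agt → Prop
  | b, .atom p => p ∈ b.V
  | b, .neg φ => ¬ msat Cxt b φ
  | b, .and φ ψ => msat Cxt b φ ∧ msat Cxt b ψ
  | b, .expbel i α => α ∈ b.B i
  | b, .impbel i φ => ∀ b' ∈ Cxt, MABase.R i b b' → msat Cxt b' φ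

/-- Consistent multi-agent belief model: all bases involved are well formed and
for every agent `i` and every `b' ∈ Cxt ∪ {b}` there is `b'' ∈ Cxt` with `b' R_i b''`. -/
def isCMAB {Agt : Type} (b : MABase Agt) (Cxt : Set (MABase Agt)) : Prop :=
  (∀ b' ∈ insert b Cxt, b'.wf) ∧
  (∀ i : Agt, ∀ b' ∈ insert b Cxt, ∃ b'' ∈ Cxt, MABase.R i b' b'')

/-- Boolean evaluation of a formula, treating atoms, explicit-belief formulas and
implicit-belief formulas as propositional atoms. -/
def boolEval {Agt : Type} (v : Frm Agt → Bool) : Frm Agt → Bool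
  | .neg φ => ! boolEval v φ
  | .and φ ψ => boolEval v φ && boolEval v ψ
  | φ => v φ

/-- Instances of classical propositional tautologies. -/
def Tautology {Agt : Type} (φ : Frm Agt) : Prop :=
  ∀ v : Frm Agt → Bool, boolEval v φ = true

/-- Derivability in the logic LDA: classical propositional logic over `L` plus
axioms K, D, Int and the necessitation rule for implicit belief. -/
inductive LDA {Agt : Type} : Frm Agt → Prop
  | taut {φ : Frm Agt} : φ.isL → Tautology φ → LDA φ
  | axK (i : Agt) {φ ψ : Frm Agt} : φ.isL → ψ.isL →
      LDA (((Frm.impbel i φ).and (Frm.impbel i (φ.imp ψ))).imp (Frm.impbel i ψ))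
  | axD (i : Agt) {φ : Frm Agt} : φ.isL →
      LDA (Frm.neg ((Frm.impbel i φ).and (Frm.impbel i (Frm.neg φ))))
  | axInt (i : Agt) {α : Frm Agt} : α.isL0 →
      LDA ((Frm.expbel i α).imp (Frm.impbel i α))
  | mp {φ ψ : Frm Agt} : LDA (φ.imp ψ) → LDA φ → LDA ψ
  | nec (i : Agt) {φ : Frm Agt} : LDA φ → LDA (Frm.impbel i φ)

/-- Conjunction of a list of formulas (the empty conjunction is a tautology). -/
def conjList {Agt : Type} : List (Frm Agt) → Frm Agt
  | [] => Frm.neg ((Frm.atom 0).and (Frm.neg (Frm.atom 0)))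
  | φ :: l => φ.and (conjList l)

/-- A set of formulas is LDA-consistent iff no contradiction is derivable in LDA
from finitely many of its members. -/
def Consistent {Agt : Type} (Δ : Set (Frm Agt)) : Prop :=
  ∀ l : List (Frm Agt), (∀ ψ ∈ l, ψ ∈ Δ) → ¬ LDA (Frm.neg (conjList l))

/-- Maximally LDA-consistent set of `L`-formulas. -/
def MCS {Agt : Type} (Γ : Set (Frm Agt)) : Prop :=
  (∀ φ ∈ Γ, φ.isL) ∧ Consistent Γ ∧
    ∀ Δ : Set (Frm Agt), (∀ φ ∈ Δ, φ.isL) → Consistent Δ → Γ ⊆ Δ → Δ = Γ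

/-- Canonical doxastic function: `α ∈ D^c(i,w)` iff `△ᵢα ∈ w`. -/
def canonD {Agt : Type} (i : Agt) (w : {Γ : Set (Frm Agt) // MCS Γ}) : Set (Frm Agt) :=
  {α | Frm.expbel i α ∈ w.val}

/-- Canonical notional function: `v ∈ N^c(i,w)` iff `□ᵢφ ∈ w` implies `φ ∈ v`. -/
def canonN {Agt : Type} (i : Agt) (w : {Γ : Set (Frm Agt) // MCS Γ}) :
    Set {Γ : Set (Frm Agt) // MCS Γ} :=
  {v | ∀ φ : Frm Agt, Frm.impbel i φ ∈ w.val → φ ∈ v.val}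

/-- Canonical valuation: `w ∈ V^c(p)` iff `p ∈ w`. -/
def canonV {Agt : Type} (p : ℕ) : Set {Γ : Set (Frm Agt) // MCS Γ} :=
  {w | Frm.atom p ∈ w.val}

/-- The canonical model of LDA: worlds are the maximally LDA-consistent sets. -/
def canonM (Agt : Type) : PreNDM Agt where
  W := {Γ : Set (Frm Agt) // MCS Γ}
  D := canonD
  N := canonN
  V := canonV

/-- `w ≡_Σ v` iff `w` and `v` satisfy the same formulas of `Σ`. -/
def filtRel {Agt : Type} (M : PreNDM Agt) (S : Set (Frm Agt)) (w v : M.W) : Prop :=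
  ∀ φ ∈ S, (M.sat w φ ↔ M.sat v φ)

/-- The setoid of `≡_Σ`-equivalent worlds. -/
def filtSetoid {Agt : Type} (M : PreNDM Agt) (S : Set (Frm Agt)) : Setoid M.W where
  r := filtRel M S
  iseqv := ⟨fun _ _ _ => Iff.rfl, fun h φ hφ => (h φ hφ).symm,
    fun h1 h2 φ hφ => (h1 φ hφ).trans (h2 φ hφ)⟩

/-- The `≡_Σ`-equivalence class `|w|_Σ` of a world `w`. -/
def filtMk {Agt : Type} (M : PreNDM Agt) (S : Set (Frm Agt)) (w : M.W) :
    Quotient (filtSetoid M S) :=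
  Quotient.mk (filtSetoid M S) w

/-- Closure under subformulas. -/
def SubClosed {Agt : Type} (S : Set (Frm Agt)) : Prop :=
  (∀ φ : Frm Agt, Frm.neg φ ∈ S → φ ∈ S) ∧
  (∀ φ ψ : Frm Agt, Frm.and φ ψ ∈ S → φ ∈ S ∧ ψ ∈ S) ∧
  (∀ (i : Agt) (φ : Frm Agt), Frm.expbel i φ ∈ S → φ ∈ S) ∧
  (∀ (i : Agt) (φ : Frm Agt), Frm.impbel i φ ∈ S → φ ∈ S)

/-- The filtration `M_Σ = (W_Σ, D_Σ, N_Σ, V_Σ)` of `M` through `Σ`: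
`W_Σ` is the quotient of `W` by `≡_Σ`;
`D_Σ(i,|w|) = (∩_{v ∈ |w|} D(i,v)) ∩ Σ`;
`N_Σ(i,|w|) = {|v| : v ∈ N(i,w)}` (smallest filtration);
`V_Σ(p) = {|w| : (M,w) ⊨ p}` if `p` occurs in `Σ`, and `∅` otherwise. -/
def filtModel {Agt : Type} (M : PreNDM Agt) (S : Set (Frm Agt)) : PreNDM Agt where
  W := Quotient (filtSetoid M S)
  D := fun i x => {α | α ∈ S ∧ ∀ v : M.W, filtMk M S v = x → α ∈ M.D i v}
  N := fun i x => {y | ∃ w v : M.W, filtMk M S w = x ∧ filtMk M S v = y ∧ v ∈ M.N i w}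
  V := fun p =>
    {x | (∃ φ ∈ S, p ∈ φ.atomsOf) ∧ ∃ w : M.W, filtMk M S w = x ∧ M.sat w (Frm.atom p)}

/-- The language of Fagin & Halpern's logic of general awareness:
`bel` is implicit belief `B_i`, `aware` is awareness `A_i`, `expk` is explicit
belief `X_i`. -/
inductive LGA (Agt : Type) : Type
  | atom : ℕ → LGA Agt
  | neg : LGA Agt → LGA Agt
  | and : LGA Agt → LGA Agt → LGA Agt
  | bel : Agt → LGA Agt → LGA Agt
  | aware : Agt → LGA Agt → LGA Agt
  | expk : Agt → LGA Agt → LGA Agt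

/-- An awareness structure `(S, R_1,…,R_n, A_1,…,A_n, π)`. -/
structure AwStruct (Agt : Type) where
  S : Type
  R : Agt → S → S → Prop
  A : Agt → S → Set (LGA Agt)
  val : ℕ → Set S

namespace AwStruct

variable {Agt : Type}

/-- Truth in an awareness structure; `X_i φ` holds iff both `B_i φ` and `A_i φ` hold. -/
def sat (M : AwStruct Agt) : M.S → LGA Agt → Prop
  | s, .atom p => s ∈ M.val p
  | s, .neg φ => ¬ sat M s φ
  | s, .and φ ψ => sat M s φ ∧ sat M s ψ
  | s, .bel i φ => ∀ t, M.R i s t → sat M t φ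
  | s, .aware i φ => φ ∈ M.A i s
  | s, .expk i φ => (∀ t, M.R i s t → sat M t φ) ∧ φ ∈ M.A i s

/-- An awareness structure is serial iff every `R_i` is serial. -/
def serial (M : AwStruct Agt) : Prop := ∀ i s, ∃ t, M.R i s t

end AwStruct

/-- The translation `tr` from `L` to the language of general awareness. -/
def tr {Agt : Type} : Frm Agt → LGA Agt
  | .atom p => .atom p
  | .neg φ => .neg (tr φ)
  | .and φ ψ => .and (tr φ) (tr ψ)
  | .expbel i α => .expk i (tr α)
  | .impbel i φ => .bel i (tr φ)

end LDAPaper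

/-!
Soundness is checked axiom by axiom and uses only seriality (C2) and the inclusion
(C1*) `N(i,w) ⊆ ⋂_{α ∈ D(i,w)} ‖α‖`, so it already holds on quasi-notional models.
Conversely, the canonical model of maximal LDA-consistent sets is quasi-notional (Int gives
(C1*), D gives (C2)), and it refutes every underivable `φ ∈ L`. Filtering it through the
subformulas of `φ` leaves finitely many classes. Naming each class by a fresh atom and adding
to `D(i,x)` the negated names of all classes outside `N(i,x)` makes `N(i,x)` exactly the set
of classes satisfying `D(i,x)`, i.e. (C1), while the truth of subformulas of `φ` is unchanged:
this gives a notional model refuting `φ`.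
-/

namespace LDAPaper

section

variable {Agt : Type}

section Propositional

@[simp] lemma boolEval_neg_eq_true (v : Frm Agt → Bool) (φ : Frm Agt) :
    boolEval v (.neg φ) = true ↔ ¬ boolEval v φ = true := by
  simp [boolEval]

@[simp] lemma boolEval_and_eq_true (v : Frm Agt → Bool) (φ ψ : Frm Agt) :
    boolEval v (.and φ ψ) = true ↔ boolEval v φ = true ∧ boolEval v ψ = true := by
  simp [boolEval]

@[simp] lemma boolEval_imp_eq_true (v : Frm Agt → Bool) (φ ψ : Frm Agt) :
    boolEval v (φ.imp ψ) = true ↔ (boolEval v φ = true → boolEval v ψ = true) := by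
  simp only [Frm.imp, boolEval_neg_eq_true, boolEval_and_eq_true]
  tauto

@[simp] lemma boolEval_conjList_eq_true (v : Frm Agt → Bool) (l : List (Frm Agt)) :
    boolEval v (conjList l) = true ↔ ∀ χ ∈ l, boolEval v χ = true := by
  induction l with
  | nil => simp only [conjList, boolEval_neg_eq_true, boolEval_and_eq_true]; simp
  | cons φ l ih => simp [conjList, ih]

lemma Frm.isL_of_isL0 {φ : Frm Agt} (h : φ.isL0) : φ.isL := by
  induction φ with
  | atom => trivial
  | neg φ ih => exact ih h
  | and φ ψ ihφ ihψ => exact ⟨ihφ h.1, ihψ h.2⟩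
  | expbel => exact h
  | impbel => exact h.elim

lemma isL_conjList_iff {l : List (Frm Agt)} : (conjList l).isL ↔ ∀ χ ∈ l, χ.isL := by
  induction l with
  | nil => exact iff_of_true ⟨trivial, trivial⟩ (by simp)
  | cons φ l ih => simp [conjList, Frm.isL, ih]

lemma LDA.isL {φ : Frm Agt} (h : LDA φ) : φ.isL := by
  induction h with
  | taut hφ => exact hφ
  | axK _ hφ hψ => exact ⟨⟨hφ, hφ, hψ⟩, hψ⟩
  | axD _ hφ => exact ⟨hφ, hφ⟩
  | axInt _ hα => exact ⟨hα, (Frm.isL_of_isL0 hα :)⟩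
  | mp _ _ ih => exact ih.2
  | nec _ _ ih => exact ih

lemma LDA.of_taut_imp {χ ψ : Frm Agt} (h : LDA χ) (hψ : ψ.isL)
    (htaut : ∀ v, boolEval v χ = true → boolEval v ψ = true) : LDA ψ :=
  .mp (.taut ⟨h.isL, hψ⟩ fun v => (boolEval_imp_eq_true v χ ψ).2 (htaut v)) h

lemma LDA.of_taut_imp₂ {χ₁ χ₂ ψ : Frm Agt} (h₁ : LDA χ₁) (h₂ : LDA χ₂) (hψ : ψ.isL)
    (htaut : ∀ v, boolEval v χ₁ = true → boolEval v χ₂ = true → boolEval v ψ = true) :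
    LDA ψ :=
  .mp (h₁.of_taut_imp ⟨h₂.isL, hψ⟩ fun v h => by simpa using htaut v h) h₂

lemma LDA.box_of_conjList_imp (i : Agt) {l : List (Frm Agt)} {ψ : Frm Agt}
    (h : LDA ((conjList l).imp ψ)) :
    LDA ((conjList (l.map (.impbel i))).imp (.impbel i ψ)) := by
  induction l generalizing ψ with
  | nil =>
    have hψ : LDA ψ := h.of_taut_imp h.isL.2 (by intro v; simp)
    exact (hψ.nec i).of_taut_imp ⟨isL_conjList_iff.2 (by simp), hψ.isL⟩ (by intro v; simp)
  | cons φ l ih =>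
    have hφ : φ.isL := h.isL.1.1
    have hψ : ψ.isL := h.isL.2
    have hcurry : LDA ((conjList l).imp (φ.imp ψ)) :=
      h.of_taut_imp ⟨h.isL.1.2, hφ, hψ⟩ (by intro v; simp [conjList]; tauto)
    have hbox := ih hcurry
    exact hbox.of_taut_imp₂ (.axK i hφ hψ) ⟨⟨hφ, hbox.isL.1⟩, hψ⟩
      (by intro v; simp [conjList]; tauto)

end Propositional

section Soundness

lemma PreNDM.sat_imp (M : PreNDM Agt) (w : M.W) (φ ψ : Frm Agt) :
    M.sat w (φ.imp ψ) ↔ (M.sat w φ → M.sat w ψ) := by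
  simp only [Frm.imp, PreNDM.sat]
  tauto

open Classical in
lemma PreNDM.boolEval_sat_eq_true (M : PreNDM Agt) (w : M.W) (φ : Frm Agt) :
    boolEval (fun ψ => decide (M.sat w ψ)) φ = true ↔ M.sat w φ := by
  induction φ with
  | neg φ ih => simp only [boolEval_neg_eq_true, ih, PreNDM.sat]
  | and φ ψ ihφ ihψ => simp only [boolEval_and_eq_true, ihφ, ihψ, PreNDM.sat]
  | _ => simp [boolEval]

lemma isNDM.isQNDM {M : PreNDM Agt} (hM : isNDM M) : isQNDM M :=
  ⟨hM.1, fun i w v hv => by rw [hM.2.1 i w] at hv; exact hv, hM.2.2⟩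

theorem LDA.sound {φ : Frm Agt} (h : LDA φ) {M : PreNDM Agt} (hM : isQNDM M) (w : M.W) :
    M.sat w φ := by
  induction h generalizing w with
  | taut _ htaut => exact (M.boolEval_sat_eq_true w _).1 (htaut _)
  | axK =>
    simp only [PreNDM.sat_imp]
    exact fun ⟨hφ, himp⟩ v hv => (M.sat_imp v _ _).1 (himp v hv) (hφ v hv)
  | axD i =>
    obtain ⟨v, hv⟩ := hM.2.2 i w
    exact fun ⟨hφ, hnφ⟩ => hnφ v hv (hφ v hv)
  | axInt i => exact (M.sat_imp w _ _).2 fun hα v hv => hM.2.1 i w v hv _ hα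
  | mp _ _ ihimp ih => exact (M.sat_imp w _ _).1 (ihimp w) (ih w)
  | nec _ _ ih => exact fun v _ => ih v

end Soundness

section Consistency

lemma exists_conjList_imp_neg_of_not_consistent_insert {Δ : Set (Frm Agt)} {ψ : Frm Agt}
    (hψ : ψ.isL) (h : ¬ Consistent (insert ψ Δ)) :
    ∃ l : List (Frm Agt), (∀ χ ∈ l, χ ∈ Δ) ∧ LDA ((conjList l).imp (.neg ψ)) := by
  classical
  simp only [Consistent, not_forall, not_not] at h
  obtain ⟨m, hm, hder⟩ := h
  have hmL := isL_conjList_iff.1 hder.isL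
  refine ⟨m.filter (· ≠ ψ), fun χ hχ => ?_, hder.of_taut_imp ⟨?_, hψ⟩ fun v => ?_⟩
  · simp only [List.mem_filter, decide_eq_true_eq] at hχ
    exact (hm χ hχ.1).resolve_left hχ.2
  · exact isL_conjList_iff.2 fun χ hχ => hmL χ (List.mem_of_mem_filter hχ)
  · simp only [boolEval_neg_eq_true, boolEval_imp_eq_true, boolEval_conjList_eq_true,
      List.mem_filter, decide_eq_true_eq]
    intro hm hrest hψv
    exact hm fun χ hχ => if hχψ : χ = ψ then hχψ ▸ hψv else hrest χ ⟨hχ, hχψ⟩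

theorem exists_MCS_superset {Δ : Set (Frm Agt)} (hL : ∀ ψ ∈ Δ, ψ.isL) (hc : Consistent Δ) :
    ∃ Γ, MCS Γ ∧ Δ ⊆ Γ := by
  set S : Set (Set (Frm Agt)) := {Θ | (∀ ψ ∈ Θ, ψ.isL) ∧ Consistent Θ}
  have hchain : ∀ c ⊆ S, IsChain (· ⊆ ·) c → c.Nonempty → ∃ ub ∈ S, ∀ Θ ∈ c, Θ ⊆ ub := by
    intro c hcS hchain hne
    refine ⟨⋃₀ c, ⟨fun ψ ⟨Θ, hΘ, hψ⟩ => (hcS hΘ).1 ψ hψ, fun l hl => ?_⟩,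
      fun _ => Set.subset_sUnion_of_mem⟩
    obtain ⟨Θ, hΘ, hlΘ⟩ := hchain.directedOn.exists_mem_subset_of_finite_of_subset_sUnion hne
      l.finite_toSet hl
    exact (hcS hΘ).2 l hlΘ
  obtain ⟨Γ, hsub, hmax⟩ := zorn_subset_nonempty S hchain Δ ⟨hL, hc⟩
  exact ⟨Γ, ⟨hmax.1.1, hmax.1.2, fun Δ' hL' hc' hsub' =>
    (hmax.eq_of_subset ⟨hL', hc'⟩ hsub').symm⟩, hsub⟩

namespace MCS

variable {Γ : Set (Frm Agt)}

lemma isL (hΓ : MCS Γ) {ψ : Frm Agt} (h : ψ ∈ Γ) : ψ.isL := hΓ.1 ψ h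

lemma mem_of_consistent_insert (hΓ : MCS Γ) {ψ : Frm Agt} (hψ : ψ.isL)
    (h : Consistent (insert ψ Γ)) : ψ ∈ Γ := by
  have hL : ∀ χ ∈ insert ψ Γ, χ.isL := by rintro χ (rfl | hχ); exacts [hψ, hΓ.isL hχ]
  exact hΓ.2.2 _ hL h (Set.subset_insert ψ Γ) ▸ Set.mem_insert ψ Γ

lemma mem_of_conjList_imp (hΓ : MCS Γ) {l : List (Frm Agt)} {ψ : Frm Agt}
    (hl : ∀ χ ∈ l, χ ∈ Γ) (h : LDA ((conjList l).imp ψ)) : ψ ∈ Γ := by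
  have hψ : ψ.isL := h.isL.2
  refine hΓ.mem_of_consistent_insert hψ (by_contra fun hc => ?_)
  obtain ⟨m, hm, hneg⟩ := exists_conjList_imp_neg_of_not_consistent_insert hψ hc
  refine hΓ.2.1 (l ++ m) (by simpa using fun χ hχ => hχ.elim (hl χ) (hm χ)) ?_
  refine h.of_taut_imp₂ hneg (isL_conjList_iff.2 fun χ hχ => hΓ.isL ?_) fun v => ?_
  · simpa using (List.mem_append.1 hχ).elim (hl χ) (hm χ)
  · simp only [boolEval_neg_eq_true, boolEval_imp_eq_true, boolEval_conjList_eq_true,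
      List.mem_append]
    exact fun hψ hnψ hall => hnψ (fun χ hχ => hall χ (.inr hχ)) (hψ fun χ hχ => hall χ (.inl hχ))

lemma mem_of_imp (hΓ : MCS Γ) {φ ψ : Frm Agt} (himp : LDA (φ.imp ψ)) (h : φ ∈ Γ) : ψ ∈ Γ :=
  hΓ.mem_of_conjList_imp (l := [φ]) (by simpa using h)
    (himp.of_taut_imp ⟨isL_conjList_iff.2 (by simpa using hΓ.isL h), himp.isL.2⟩
      fun v => by simp)

lemma mem_of_LDA (hΓ : MCS Γ) {ψ : Frm Agt} (h : LDA ψ) : ψ ∈ Γ :=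
  hΓ.mem_of_conjList_imp (l := []) (by simp)
    (h.of_taut_imp ⟨isL_conjList_iff.2 (by simp), h.isL⟩ fun v => by simp)

lemma mem_of_taut_imp (hΓ : MCS Γ) {l : List (Frm Agt)} {ψ : Frm Agt} (hl : ∀ χ ∈ l, χ ∈ Γ)
    (hψ : ψ.isL) (htaut : ∀ v, (∀ χ ∈ l, boolEval v χ = true) → boolEval v ψ = true) :
    ψ ∈ Γ :=
  hΓ.mem_of_conjList_imp hl <| .taut ⟨isL_conjList_iff.2 fun χ hχ => hΓ.isL (hl χ hχ), hψ⟩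
    fun v => by simpa using htaut v

lemma notMem_of_neg_mem (hΓ : MCS Γ) {ψ : Frm Agt} (h : .neg ψ ∈ Γ) : ψ ∉ Γ := fun hψ =>
  hΓ.2.1 [ψ, .neg ψ] (by simp [hψ, h])
    (.taut (isL_conjList_iff.2 (by simpa [Frm.isL] using hΓ.isL hψ)) fun v => by simp)

lemma neg_mem_iff (hΓ : MCS Γ) {ψ : Frm Agt} (hψ : ψ.isL) : .neg ψ ∈ Γ ↔ ψ ∉ Γ := by
  refine ⟨hΓ.notMem_of_neg_mem, fun h => ?_⟩
  obtain ⟨l, hl, himp⟩ := exists_conjList_imp_neg_of_not_consistent_insert hψ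
    fun hc => h (hΓ.mem_of_consistent_insert hψ hc)
  exact hΓ.mem_of_conjList_imp hl himp

lemma and_mem_iff (hΓ : MCS Γ) {φ ψ : Frm Agt} : .and φ ψ ∈ Γ ↔ φ ∈ Γ ∧ ψ ∈ Γ := by
  refine ⟨fun h => ⟨?_, ?_⟩, fun ⟨hφ, hψ⟩ => ?_⟩
  · exact hΓ.mem_of_taut_imp (l := [_]) (by simpa using h) (hΓ.isL h).1 fun v => by simp_all
  · exact hΓ.mem_of_taut_imp (l := [_]) (by simpa using h) (hΓ.isL h).2 fun v => by simp_all
  · exact hΓ.mem_of_taut_imp (l := [φ, ψ]) (by simp [hφ, hψ]) ⟨hΓ.isL hφ, hΓ.isL hψ⟩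
      fun v => by simp

end MCS

end Consistency

section Canonical

lemma exists_canonN_neg_mem {i : Agt} (w : (canonM Agt).W) {ψ : Frm Agt} (hψ : ψ.isL)
    (h : .impbel i ψ ∉ w.val) : ∃ v ∈ canonN i w, .neg ψ ∈ v.val := by
  have hcons : Consistent (insert (.neg ψ) {χ | .impbel i χ ∈ w.val}) := by
    by_contra hc
    obtain ⟨l, hl, himp⟩ := exists_conjList_imp_neg_of_not_consistent_insert (ψ := .neg ψ) hψ hc
    have hψl : LDA ((conjList l).imp ψ) := himp.of_taut_imp ⟨himp.isL.1, hψ⟩ fun v => by simp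
    exact h (w.2.mem_of_conjList_imp (by simpa using hl) (hψl.box_of_conjList_imp i))
  obtain ⟨Γ, hΓ, hsub⟩ := exists_MCS_superset
    (by rintro χ (rfl | hχ); exacts [hψ, w.2.isL (ψ := .impbel i χ) hχ]) hcons
  exact ⟨⟨Γ, hΓ⟩, fun χ hχ => hsub (.inr hχ), hsub (.inl rfl)⟩

lemma canonM_sat_iff {ψ : Frm Agt} (hψ : ψ.isL) (w : (canonM Agt).W) :
    (canonM Agt).sat w ψ ↔ ψ ∈ w.val := by
  induction ψ generalizing w with
  | atom => rfl
  | neg ψ ih => exact (not_congr (ih hψ w)).trans (w.2.neg_mem_iff (ψ := ψ) hψ).symm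
  | and φ ψ ihφ ihψ => exact (and_congr (ihφ hψ.1 w) (ihψ hψ.2 w)).trans w.2.and_mem_iff.symm
  | expbel => rfl
  | impbel i ψ ih =>
    refine ⟨fun h => by_contra fun hnot => ?_, fun h v hv => (ih hψ v).2 (hv ψ h)⟩
    obtain ⟨v, hv, hneg⟩ := exists_canonN_neg_mem w (ψ := ψ) hψ hnot
    exact v.2.notMem_of_neg_mem hneg ((ih hψ v).1 (h v hv))

lemma isQNDM_canonM : isQNDM (canonM Agt) := by
  refine ⟨fun i w α hα => w.2.isL hα, fun i w v hv α hα => ?_, fun i w => ?_⟩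
  · have hα0 : α.isL0 := w.2.isL hα
    exact (canonM_sat_iff (Frm.isL_of_isL0 hα0) v).2 (hv α (w.2.mem_of_imp (.axInt i hα0) hα))
  · let falsum : Frm Agt := .and (.atom 0) (.neg (.atom 0))
    have hfalsumL : falsum.isL := ⟨trivial, trivial⟩
    have hbox_not_falsum : LDA (.impbel i (.neg falsum)) :=
      .nec i (.taut (φ := .neg falsum) hfalsumL fun v => by simp [falsum])
    have hfalsum : .impbel i falsum ∉ w.val := fun h =>
      w.2.notMem_of_neg_mem (w.2.mem_of_LDA (.axD i hfalsumL))
        (w.2.and_mem_iff.2 ⟨h, w.2.mem_of_LDA hbox_not_falsum⟩)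
    obtain ⟨v, hv, -⟩ := exists_canonN_neg_mem w hfalsumL hfalsum
    exact ⟨v, hv⟩

lemma consistent_neg_of_not_LDA {φ : Frm Agt} (hφ : φ.isL) (h : ¬ LDA φ) :
    Consistent {.neg φ} := by
  by_contra hc
  rw [Set.singleton_def] at hc
  obtain ⟨l, hl, himp⟩ := exists_conjList_imp_neg_of_not_consistent_insert (ψ := .neg φ) hφ hc
  obtain rfl : l = [] := List.eq_nil_iff_forall_not_mem.2 hl
  exact h (himp.of_taut_imp hφ fun v => by simp)

theorem LDA.of_forall_isQNDM {φ : Frm Agt} (hφ : φ.isL)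
    (h : ∀ M : PreNDM Agt, isQNDM M → ∀ w : M.W, M.sat w φ) : LDA φ := by
  by_contra hnd
  obtain ⟨Γ, hΓ, hsub⟩ := exists_MCS_superset (by simpa [Frm.isL] using hφ)
    (consistent_neg_of_not_LDA hφ hnd)
  exact hΓ.notMem_of_neg_mem (hsub rfl)
    ((canonM_sat_iff hφ ⟨Γ, hΓ⟩).1 (h _ isQNDM_canonM _))

end Canonical

section Subformulas

def subformulas : Frm Agt → Set (Frm Agt)
  | .atom p => {.atom p}
  | .neg φ => insert (.neg φ) (subformulas φ)
  | .and φ ψ => insert (.and φ ψ) (subformulas φ ∪ subformulas ψ)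
  | .expbel i φ => insert (.expbel i φ) (subformulas φ)
  | .impbel i φ => insert (.impbel i φ) (subformulas φ)

lemma mem_subformulas_self (φ : Frm Agt) : φ ∈ subformulas φ := by
  cases φ <;> simp [subformulas]

lemma subformulas_subset_of_mem {φ ψ : Frm Agt} (h : ψ ∈ subformulas φ) :
    subformulas ψ ⊆ subformulas φ := by
  induction φ with
  | atom => obtain rfl := h; rfl
  | neg φ ih | expbel _ φ ih | impbel _ φ ih =>
    obtain rfl | h := h
    exacts [subset_rfl, (ih h).trans (Set.subset_insert _ _)]
  | and φ₁ φ₂ ih₁ ih₂ =>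
    obtain rfl | h | h := h
    exacts [subset_rfl, (ih₁ h).trans (Set.subset_union_left.trans (Set.subset_insert _ _)),
      (ih₂ h).trans (Set.subset_union_right.trans (Set.subset_insert _ _))]

lemma subClosed_subformulas (φ : Frm Agt) : SubClosed (subformulas φ) :=
  ⟨fun ψ h => subformulas_subset_of_mem h (.inr (mem_subformulas_self ψ)),
    fun ψ₁ ψ₂ h => ⟨subformulas_subset_of_mem h (.inr (.inl (mem_subformulas_self ψ₁))),
      subformulas_subset_of_mem h (.inr (.inr (mem_subformulas_self ψ₂)))⟩,
    fun _ ψ h => subformulas_subset_of_mem h (.inr (mem_subformulas_self ψ)),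
    fun _ ψ h => subformulas_subset_of_mem h (.inr (mem_subformulas_self ψ))⟩

lemma finite_subformulas (φ : Frm Agt) : (subformulas φ).Finite := by
  induction φ with
  | atom => exact Set.finite_singleton _
  | neg _ ih | expbel _ _ ih | impbel _ _ ih => exact ih.insert _
  | and _ _ ih₁ ih₂ => exact (ih₁.union ih₂).insert _

lemma finite_atomsOf (φ : Frm Agt) : φ.atomsOf.Finite := by
  induction φ with
  | atom => exact Set.finite_singleton _
  | neg _ ih | expbel _ _ ih | impbel _ _ ih => exact ih
  | and _ _ ih₁ ih₂ => exact ih₁.union ih₂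

end Subformulas

section Filtration

def namedFiltration (M : PreNDM Agt) (S : Set (Frm Agt)) (ι : Quotient (filtSetoid M S) → ℕ) :
    PreNDM Agt where
  W := Quotient (filtSetoid M S)
  D i x := (filtModel M S).D i x ∪ {α | ∃ z ∉ (filtModel M S).N i x, α = .neg (.atom (ι z))}
  N := (filtModel M S).N
  V p := (filtModel M S).V p ∪ {x | ι x = p}

variable {M : PreNDM Agt} {S : Set (Frm Agt)} {ι : Quotient (filtSetoid M S) → ℕ}

lemma namedFiltration_sat_iff (hS : SubClosed S) (hfresh : ∀ x, ∀ φ ∈ S, ι x ∉ φ.atomsOf)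
    {ψ : Frm Agt} (hψ : ψ ∈ S) (w : M.W) :
    (namedFiltration M S ι).sat (filtMk M S w) ψ ↔ M.sat w ψ := by
  induction ψ generalizing w with
  | atom p =>
    refine ⟨?_, fun hp => .inl ⟨⟨_, hψ, rfl⟩, w, rfl, hp⟩⟩
    rintro (⟨-, w', hw', hp⟩ | hp)
    · exact ((Quotient.exact hw' : filtRel M S w' w) (.atom p) hψ).1 hp
    · exact (hfresh _ _ hψ (Set.mem_singleton_iff.2 hp)).elim
  | neg ψ ih => exact not_congr (ih (hS.1 ψ hψ) w)
  | and φ ψ ihφ ihψ =>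
    exact and_congr (ihφ (hS.2.1 φ ψ hψ).1 w) (ihψ (hS.2.1 φ ψ hψ).2 w)
  | expbel i α =>
    refine ⟨?_, fun hα => .inl ⟨hS.2.2.1 i α hψ, fun v hv =>
      ((Quotient.exact hv : filtRel M S v w) (.expbel i α) hψ).2 hα⟩⟩
    rintro (⟨-, hα⟩ | ⟨z, -, rfl⟩)
    · exact hα w rfl
    · exact (hfresh z _ hψ (Set.mem_singleton _)).elim
  | impbel i ψ ih =>
    refine ⟨fun h v hv => (ih (hS.2.2.2 i ψ hψ) v).1 (h _ ⟨w, v, rfl, rfl, hv⟩), ?_⟩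
    rintro h _ ⟨w', v, hw', rfl, hv⟩
    exact (ih (hS.2.2.2 i ψ hψ) v).2
      (((Quotient.exact hw' : filtRel M S w' w) (.impbel i ψ) hψ).2 h v hv)

lemma namedFiltration_sat_atom_iff (hfresh : ∀ x, ∀ φ ∈ S, ι x ∉ φ.atomsOf)
    (hinj : Function.Injective ι) (x z : Quotient (filtSetoid M S)) :
    (namedFiltration M S ι).sat x (.atom (ι z)) ↔ x = z := by
  refine ⟨?_, fun h => .inr (h ▸ rfl)⟩
  rintro (⟨⟨φ, hφ, hz⟩, -⟩ | h)
  exacts [(hfresh z φ hφ hz).elim, hinj h]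

lemma isNDM_namedFiltration (hM : isQNDM M) (hS : SubClosed S)
    (hfresh : ∀ x, ∀ φ ∈ S, ι x ∉ φ.atomsOf) (hinj : Function.Injective ι) :
    isNDM (namedFiltration M S ι) := by
  refine ⟨?_, fun i x => Set.ext fun y => ⟨?_, fun hy => by_contra fun hyN => ?_⟩, ?_⟩
  · rintro i x α (⟨-, hα⟩ | ⟨z, -, rfl⟩)
    · obtain ⟨w, rfl⟩ := Quotient.exists_rep x
      exact hM.1 i w α (hα w rfl)
    · trivial
  · rintro hy α (⟨hαS, hα⟩ | ⟨z, hz, rfl⟩)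
    · obtain ⟨w, v, rfl, rfl, hv⟩ := hy
      exact (namedFiltration_sat_iff hS hfresh hαS v).2 (hM.2.1 i w v hv α (hα w rfl))
    · exact fun h => hz ((namedFiltration_sat_atom_iff hfresh hinj y z).1 h ▸ hy)
  · exact hy _ (.inr ⟨y, hyN, rfl⟩) ((namedFiltration_sat_atom_iff hfresh hinj y y).2 rfl)
  · intro i x
    obtain ⟨w, rfl⟩ := Quotient.exists_rep x
    obtain ⟨v, hv⟩ := hM.2.2 i w
    exact ⟨filtMk M S v, w, v, rfl, rfl, hv⟩

lemma finite_quotient_filtSetoid (M : PreNDM Agt) {S : Set (Frm Agt)} (hS : S.Finite) :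
    Finite (Quotient (filtSetoid M S)) := by
  have := hS.to_subtype
  refine Finite.of_injective (Quotient.lift (fun w (φ : S) => M.sat w φ)
    fun v w hvw => funext fun φ => propext (hvw φ φ.2)) fun x y => ?_
  refine Quotient.inductionOn₂ x y fun v w hvw => Quotient.sound fun φ hφ => ?_
  exact iff_of_eq (congrFun hvw ⟨φ, hφ⟩)

lemma exists_injective_nat_forall_notMem (α : Type*) [Finite α] {A : Set ℕ} (hA : A.Finite) :
    ∃ ι : α → ℕ, Function.Injective ι ∧ ∀ x, ι x ∉ A := by
  obtain ⟨f, hf⟩ := exists_injective_nat α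
  obtain ⟨N, hN⟩ := hA.bddAbove
  refine ⟨fun x => N + 1 + f x, fun x y h => hf (by simpa using h), fun x hx => ?_⟩
  have : N + 1 + f x ≤ N := hN hx
  omega

theorem sat_of_forall_isNDM {φ : Frm Agt} (h : ∀ M : PreNDM Agt, isNDM M → ∀ w : M.W, M.sat w φ)
    {M : PreNDM Agt} (hM : isQNDM M) (w : M.W) : M.sat w φ := by
  have := finite_quotient_filtSetoid M (finite_subformulas φ)
  obtain ⟨ι, hinj, hfresh⟩ := exists_injective_nat_forall_notMem
    (Quotient (filtSetoid M (subformulas φ)))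
    ((finite_subformulas φ).biUnion fun ψ _ => finite_atomsOf ψ)
  have hfresh' : ∀ x, ∀ ψ ∈ subformulas φ, ι x ∉ ψ.atomsOf :=
    fun x ψ hψ hx => hfresh x (Set.mem_biUnion hψ hx)
  exact (namedFiltration_sat_iff (subClosed_subformulas φ) hfresh' (mem_subformulas_self φ) w).1
    (h _ (isNDM_namedFiltration hM (subClosed_subformulas φ) hfresh' hinj) _)

end Filtration

end

theorem soundness_completeness_ndm_general (Agt : Type) (φ : Frm Agt)
    (hφ : φ.isL) :
    LDA φ ↔ ∀ M : PreNDM Agt, isNDM M → ∀ w : M.W, M.sat w φ :=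
  ⟨fun h _ hM => h.sound hM.isQNDM,
    fun h => .of_forall_isQNDM hφ fun _ hM => sat_of_forall_isNDM h hM⟩

/-- **Soundness and completeness for NDMs.** A formula `φ ∈ L` is derivable in LDA
iff `φ` is valid for the class of notional doxastic models. -/
theorem soundness_completeness_ndm (Agt : Type) [Fintype Agt] (φ : Frm Agt)
    (hφ : φ.isL) :
    LDA φ ↔ ∀ M : PreNDM Agt, isNDM M → ∀ w : M.W, M.sat w φ :=
  soundness_completeness_ndm_general Agt φ hφ

end LDAPaper
end

section
/- Embedding into the logic of general awareness: For every formula φ ∈ L, φ is satisfiable for the class of quasi-notional doxastic models if and only if tr(φ) is satisfiable for the class of serial awareness structures. -/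
namespace LDAPaper

lemma tr_inj {Agt : Type} : ∀ a b : Frm Agt, tr a = tr b → a = b := by
  intro a
  induction a with
  | atom p => intro b h; cases b <;> simp [tr] at h; simp [h]
  | neg φ ih => intro b h; cases b <;> simp [tr] at h; rw [ih _ h]
  | and φ ψ ih1 ih2 =>
      intro b h; cases b <;> simp [tr] at h; rw [ih1 _ h.1, ih2 _ h.2]
  | expbel i α ih =>
      intro b h; cases b <;> simp [tr] at h; rw [h.1, ih _ h.2]
  | impbel i φ ih =>
      intro b h; cases b <;> simp [tr] at h; rw [h.1, ih _ h.2]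

lemma isL0_isL {Agt : Type} : ∀ α : Frm Agt, α.isL0 → α.isL := by
  intro α
  induction α with
  | atom p => intro _; trivial
  | neg φ ih => exact ih
  | and φ ψ ih1 ih2 => exact fun h => ⟨ih1 h.1, ih2 h.2⟩
  | expbel i α ih => exact fun h => h
  | impbel i φ ih => exact fun h => h.elim

/-- Awareness structure induced by a model. -/
def toAw {Agt : Type} (M : PreNDM Agt) : AwStruct Agt where
  S := M.W
  R := fun i w v => v ∈ M.N i w
  A := fun i w => tr '' M.D i w
  val := M.V

lemma toAw_sat {Agt : Type} (M : PreNDM Agt) (hQ : isQNDM M) :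
    ∀ φ : Frm Agt, φ.isL → ∀ w : M.W,
      ((toAw M).sat w (tr φ) ↔ M.sat w φ) := by
  intro φ
  induction φ with
  | atom p => intro _ w; exact Iff.rfl
  | neg ψ ih => intro h w; exact not_congr (ih h w)
  | and ψ χ ih1 ih2 =>
      intro h w; exact and_congr (ih1 h.1 w) (ih2 h.2 w)
  | expbel i α ih =>
      intro h w
      simp only [tr, AwStruct.sat, PreNDM.sat, toAw]
      constructor
      · rintro ⟨-, β, hβ, hβtr⟩
        rwa [← tr_inj _ _ hβtr]
      · intro hα
        refine ⟨fun t ht => ?_, α, hα, rfl⟩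
        exact (ih (isL0_isL α h) t).2 (hQ.2.1 i w t ht α hα)
  | impbel i ψ ih =>
      intro h w
      simp only [tr, AwStruct.sat, PreNDM.sat, toAw]
      exact forall_congr' fun t => imp_congr Iff.rfl (ih h t)

/-- Model induced by an awareness structure. -/
def toM {Agt : Type} (Aw : AwStruct Agt) : PreNDM Agt where
  W := Aw.S
  D := fun i s => {α | α.isL0 ∧ tr α ∈ Aw.A i s ∧ ∀ t, Aw.R i s t → Aw.sat t (tr α)}
  N := fun i s => {t | Aw.R i s t}
  V := Aw.val

lemma toM_sat {Agt : Type} (Aw : AwStruct Agt) :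
    ∀ φ : Frm Agt, φ.isL → ∀ s : Aw.S,
      ((toM Aw).sat s φ ↔ Aw.sat s (tr φ)) := by
  intro φ
  induction φ with
  | atom p => intro _ s; exact Iff.rfl
  | neg ψ ih => intro h s; exact not_congr (ih h s)
  | and ψ χ ih1 ih2 =>
      intro h s; exact and_congr (ih1 h.1 s) (ih2 h.2 s)
  | expbel i α ih =>
      intro h s
      simp only [tr, AwStruct.sat, PreNDM.sat, toM, Set.mem_setOf_eq]
      constructor
      · rintro ⟨-, hA, hall⟩; exact ⟨hall, hA⟩
      · rintro ⟨hall, hA⟩; exact ⟨h, hA, hall⟩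
  | impbel i ψ ih =>
      intro h s
      simp only [tr, AwStruct.sat, PreNDM.sat, toM, Set.mem_setOf_eq]
      exact forall_congr' fun t => imp_congr Iff.rfl (ih h t)

/-- **Embedding into the logic of general awareness.** A formula `φ ∈ L` is
satisfiable for the class of quasi-NDMs iff `tr(φ)` is satisfiable for the class of
serial awareness structures. -/
theorem embedding_qndm_awareness (Agt : Type) [Fintype Agt] (φ : Frm Agt)
    (hφ : φ.isL) :
    (∃ M : PreNDM Agt, isQNDM M ∧ ∃ w : M.W, M.sat w φ) ↔
      (∃ M : AwStruct Agt, M.serial ∧ ∃ s : M.S, M.sat s (tr φ)) := by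
  constructor
  · rintro ⟨M, hQ, w, hw⟩
    refine ⟨toAw M, fun i s => ?_, w, (toAw_sat M hQ φ hφ w).2 hw⟩
    obtain ⟨t, ht⟩ := hQ.2.2 i s
    exact ⟨t, ht⟩
  · rintro ⟨Aw, hser, s, hs⟩
    refine ⟨toM Aw, ⟨?_, ?_, ?_⟩, s, (toM_sat Aw φ hφ s).2 hs⟩
    · intro i w α hα; exact hα.1
    · intro i w v hv α hα
      exact (toM_sat Aw α (isL0_isL α hα.1) v).2 (hα.2.2 v hv)
    · intro i w; exact hser i w

end LDAPaper
end

section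
/- For every formula φ ∈ L, φ is satisfiable for the class of consistent multi-agent belief models (CMABs) if and only if tr(φ) is satisfiable for the class of serial awareness structures. -/
namespace LDAPaper

section EmbeddingAux

variable {Agt : Type}

/- ### Basic lemmas -/

lemma isL_of_isL0 : ∀ {α : Frm Agt}, α.isL0 → α.isL := by
  intro α
  induction α with
  | atom p => exact fun h => h
  | neg α ih => exact ih
  | and α β ih1 ih2 => exact fun h => ⟨ih1 h.1, ih2 h.2⟩
  | expbel i α ih => exact fun h => h
  | impbel i α ih => exact fun h => h.elim

/-- A left inverse of the translation `tr`. -/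
def untr : LGA Agt → Frm Agt
  | .atom p => .atom p
  | .neg χ => .neg (untr χ)
  | .and χ ψ => .and (untr χ) (untr ψ)
  | .bel i χ => .impbel i (untr χ)
  | .aware _ _ => .atom 0
  | .expk i χ => .expbel i (untr χ)

lemma untr_tr : ∀ a : Frm Agt, untr (tr a) = a := by
  intro a; induction a <;> simp [tr, untr, *]

lemma tr_injective (a b : Frm Agt) (h : tr a = tr b) : a = b := by
  have := congrArg untr h
  rwa [untr_tr, untr_tr] at this

lemma atomsOf_finite : ∀ φ : Frm Agt, φ.atomsOf.Finite := by
  intro φ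
  induction φ with
  | atom p => exact Set.finite_singleton p
  | neg _ ih => exact ih
  | and _ _ ih1 ih2 => exact ih1.union ih2
  | expbel _ _ ih => exact ih
  | impbel _ _ ih => exact ih

lemma msat_iff_bsat (Cxt : Set (MABase Agt)) :
    ∀ {α : Frm Agt}, α.isL0 → ∀ b, msat Cxt b α ↔ b.bsat α := by
  intro α
  induction α with
  | atom p => exact fun _ b => Iff.rfl
  | neg α ih => exact fun h b => not_congr (ih h b)
  | and α β ih1 ih2 => exact fun h b => and_congr (ih1 h.1 b) (ih2 h.2 b)
  | expbel i α ih => exact fun _ b => Iff.rfl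
  | impbel i α ih => exact fun h => h.elim

/- ### Forward direction: from a CMAB to a serial awareness structure -/

/-- The awareness structure built from a multi-agent belief model. -/
def fwdAS (b : MABase Agt) (Cxt : Set (MABase Agt)) : AwStruct Agt where
  S := {x : MABase Agt // x ∈ insert b Cxt}
  R := fun i s t => t.val ∈ Cxt ∧ MABase.R i s.val t.val
  A := fun i s => tr '' (s.val.B i)
  val := fun p => {s | p ∈ s.val.V}

lemma fwd_truth (b : MABase Agt) (Cxt : Set (MABase Agt)) :
    ∀ (ψ : Frm Agt), ψ.isL → ∀ s : (fwdAS b Cxt).S,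
      (fwdAS b Cxt).sat s (tr ψ) ↔ msat Cxt s.val ψ := by
  intro ψ
  induction ψ with
  | atom p => exact fun _ s => Iff.rfl
  | neg ψ ih => exact fun h s => not_congr (ih h s)
  | and ψ χ ih1 ih2 => exact fun h s => and_congr (ih1 h.1 s) (ih2 h.2 s)
  | expbel i α ih =>
    intro h s
    constructor
    · rintro ⟨-, hA⟩
      obtain ⟨α', hα', heq⟩ := hA
      rwa [tr_injective _ _ heq] at hα'
    · intro hα
      refine ⟨?_, ⟨α, hα, rfl⟩⟩
      rintro t ⟨htC, htR⟩
      exact (ih (isL_of_isL0 h) t).2 ((msat_iff_bsat Cxt h t.val).2 (htR α hα))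
  | impbel i ψ ih =>
    intro h s
    constructor
    · intro hB b' hb' hR
      exact (ih h ⟨b', Set.mem_insert_of_mem _ hb'⟩).1
        (hB ⟨b', Set.mem_insert_of_mem _ hb'⟩ ⟨hb', hR⟩)
    · rintro hm t ⟨htC, htR⟩
      exact (ih h t).2 (hm t.val htC htR)

/- ### Backward direction, stage 2: from a finite serial awareness structure to a CMAB -/

variable (M : AwStruct Agt) (tag : M.S → ℕ) (A0 : Set ℕ)

/-- The belief base associated to a state of an awareness structure. -/
def mkBase (t : M.S) : MABase Agt where
  B := fun i =>
    {α | α.isL0 ∧ α.atomsOf ⊆ A0 ∧ M.sat t (.expk i (tr α))} ∪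
    {β | ∃ u, ¬ M.R i t u ∧ β = .neg (.atom (tag u))}
  V := {p | p ∈ A0 ∧ t ∈ M.val p} ∪ {tag t}

lemma mkBase_mem_V (hfresh : ∀ x, tag x ∉ A0) {p : ℕ} {t : M.S} (hp : p ∈ A0) :
    p ∈ (mkBase M tag A0 t).V ↔ t ∈ M.val p := by
  constructor
  · rintro (⟨-, h⟩ | h)
    · exact h
    · exact absurd (h ▸ hp) (hfresh t)
  · exact fun h => Or.inl ⟨hp, h⟩

lemma mkBase_expbel (hfresh : ∀ x, tag x ∉ A0) {α : Frm Agt}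
    (h0 : α.isL0) (hA : α.atomsOf ⊆ A0) (i : Agt) (t : M.S) :
    α ∈ (mkBase M tag A0 t).B i ↔ M.sat t (.expk i (tr α)) := by
  constructor
  · rintro (⟨-, -, h⟩ | ⟨u, -, rfl⟩)
    · exact h
    · exact absurd (hA rfl) (hfresh u)
  · exact fun h => Or.inl ⟨h0, hA, h⟩

lemma mkBase_bsat (hfresh : ∀ x, tag x ∉ A0) :
    ∀ {α : Frm Agt}, α.isL0 → α.atomsOf ⊆ A0 →
      ∀ t, (mkBase M tag A0 t).bsat α ↔ M.sat t (tr α) := by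
  intro α
  induction α with
  | atom p => exact fun _ hA t => mkBase_mem_V M tag A0 hfresh (hA rfl)
  | neg α ih => exact fun h hA t => not_congr (ih h hA t)
  | and α β ih1 ih2 =>
    exact fun h hA t => and_congr (ih1 h.1 (fun p hp => hA (Or.inl hp)) t)
      (ih2 h.2 (fun p hp => hA (Or.inr hp)) t)
  | expbel i α ih => exact fun h hA t => mkBase_expbel M tag A0 hfresh (α := α) h hA i t
  | impbel i α ih => exact fun h => h.elim

lemma mkBase_R_iff (htag : Function.Injective tag) (hfresh : ∀ x, tag x ∉ A0)
    {i : Agt} {t t' : M.S} :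
    MABase.R i (mkBase M tag A0 t) (mkBase M tag A0 t') ↔ M.R i t t' := by
  constructor
  · intro h
    by_contra hR
    have hb := h (.neg (.atom (tag t'))) (Or.inr ⟨t', hR, rfl⟩)
    exact hb (Or.inr rfl)
  · rintro hR β (⟨h0, hA, hx⟩ | ⟨u, hu, rfl⟩)
    · exact (mkBase_bsat M tag A0 hfresh h0 hA t').2 (hx.1 t' hR)
    · rintro (⟨hmem, -⟩ | heq)
      · exact hfresh u hmem
      · exact hu (by rw [htag heq]; exact hR)

lemma bwd_truth (htag : Function.Injective tag) (hfresh : ∀ x, tag x ∉ A0) :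
    ∀ {ψ : Frm Agt}, ψ.isL → ψ.atomsOf ⊆ A0 → ∀ t : M.S,
      msat (Set.range (mkBase M tag A0)) (mkBase M tag A0 t) ψ ↔ M.sat t (tr ψ) := by
  intro ψ
  induction ψ with
  | atom p => exact fun _ hA t => mkBase_mem_V M tag A0 hfresh (hA rfl)
  | neg ψ ih => exact fun h hA t => not_congr (ih h hA t)
  | and ψ χ ih1 ih2 =>
    exact fun h hA t => and_congr (ih1 h.1 (fun p hp => hA (Or.inl hp)) t)
      (ih2 h.2 (fun p hp => hA (Or.inr hp)) t)
  | expbel i α ih => exact fun h hA t => mkBase_expbel M tag A0 hfresh (α := α) h hA i t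
  | impbel i ψ ih =>
    intro h hA t
    constructor
    · intro hm t' hR
      exact (ih h hA t').1 (hm (mkBase M tag A0 t') ⟨t', rfl⟩
        ((mkBase_R_iff M tag A0 htag hfresh).2 hR))
    · intro hs b' hb' hR
      obtain ⟨t', rfl⟩ := hb'
      exact (ih h hA t').2 (hs t' ((mkBase_R_iff M tag A0 htag hfresh).1 hR))

lemma bwd_cmab (htag : Function.Injective tag) (hfresh : ∀ x, tag x ∉ A0)
    (hser : M.serial) (s0 : M.S) :
    isCMAB (mkBase M tag A0 s0) (Set.range (mkBase M tag A0)) := by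
  have hmem : ∀ b' ∈ insert (mkBase M tag A0 s0) (Set.range (mkBase M tag A0)),
      ∃ t, mkBase M tag A0 t = b' := by
    rintro b' (rfl | ⟨t, rfl⟩)
    · exact ⟨s0, rfl⟩
    · exact ⟨t, rfl⟩
  constructor
  · intro b' hb'
    obtain ⟨t, rfl⟩ := hmem b' hb'
    rintro i α (⟨h0, -, -⟩ | ⟨u, -, rfl⟩)
    · exact h0
    · trivial
  · intro i b' hb'
    obtain ⟨t, rfl⟩ := hmem b' hb'
    obtain ⟨t', hR⟩ := hser i t
    exact ⟨mkBase M tag A0 t', ⟨t', rfl⟩, (mkBase_R_iff M tag A0 htag hfresh).2 hR⟩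

/- ### Backward direction, stage 1: filtration of an awareness structure -/

/-- Equivalence of states agreeing on all formulas in `L`. -/
def filtEqv (L : List (LGA Agt)) : Setoid M.S where
  r s t := ∀ χ ∈ L, (M.sat s χ ↔ M.sat t χ)
  iseqv := ⟨fun _ _ _ => Iff.rfl, fun h χ hχ => (h χ hχ).symm,
    fun h1 h2 χ hχ => (h1 χ hχ).trans (h2 χ hχ)⟩

/-- The filtration of an awareness structure through a list of formulas. -/
def filtAS (L : List (LGA Agt)) : AwStruct Agt where
  S := Quotient (filtEqv M L)
  R := fun i x y => ∃ s t, Quotient.mk (filtEqv M L) s = x ∧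
        Quotient.mk (filtEqv M L) t = y ∧ M.R i s t
  A := fun i x => {ψ | (LGA.aware i ψ ∈ L ∨ LGA.expk i ψ ∈ L) ∧
        ∃ s, Quotient.mk (filtEqv M L) s = x ∧ ψ ∈ M.A i s}
  val := fun p => {x | LGA.atom p ∈ L ∧
        ∃ s, Quotient.mk (filtEqv M L) s = x ∧ s ∈ M.val p}

lemma filt_truth (L : List (LGA Agt))
    (hneg : ∀ χ, LGA.neg χ ∈ L → χ ∈ L)
    (hand : ∀ χ ψ, LGA.and χ ψ ∈ L → χ ∈ L ∧ ψ ∈ L)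
    (hbel : ∀ (i : Agt) χ, LGA.bel i χ ∈ L → χ ∈ L)
    (hexpk : ∀ (i : Agt) χ, LGA.expk i χ ∈ L → χ ∈ L) :
    ∀ χ, χ ∈ L → ∀ s : M.S,
      (filtAS M L).sat (Quotient.mk (filtEqv M L) s) χ ↔ M.sat s χ := by
  intro χ
  induction χ with
  | atom p =>
    intro hχ s
    constructor
    · rintro ⟨-, s', hs', hv⟩
      exact ((Quotient.exact hs') _ hχ).1 hv
    · exact fun h => ⟨hχ, s, rfl, h⟩
  | neg χ ih => exact fun hχ s => not_congr (ih (hneg _ hχ) s)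
  | and χ ψ ih1 ih2 =>
    exact fun hχ s => and_congr (ih1 (hand _ _ hχ).1 s) (ih2 (hand _ _ hχ).2 s)
  | bel i χ ih =>
    intro hχ s
    constructor
    · intro hB t hR
      exact (ih (hbel _ _ hχ) t).1
        (hB (Quotient.mk (filtEqv M L) t) ⟨s, t, rfl, rfl, hR⟩)
    · rintro hB y ⟨s', t', hs', rfl, hR⟩
      exact (ih (hbel _ _ hχ) t').2 ((((Quotient.exact hs') _ hχ).2 hB) t' hR)
  | aware i ψ ih =>
    intro hχ s
    constructor
    · rintro ⟨-, s', hs', hA⟩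
      exact ((Quotient.exact hs') _ hχ).1 hA
    · exact fun h => ⟨Or.inl hχ, s, rfl, h⟩
  | expk i ψ ih =>
    intro hχ s
    constructor
    · rintro ⟨hB, hd, s', hs', hA⟩
      have hsat' : M.sat s' (LGA.expk i ψ) := by
        refine ⟨?_, hA⟩
        intro t hR
        exact (ih (hexpk _ _ hχ) t).1
          (hB (Quotient.mk (filtEqv M L) t) ⟨s', t, hs', rfl, hR⟩)
      exact ((Quotient.exact hs') _ hχ).1 hsat'
    · intro h
      refine ⟨?_, Or.inr hχ, s, rfl, h.2⟩
      rintro y ⟨s', t', hs', rfl, hR⟩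
      exact (ih (hexpk _ _ hχ) t').2 ((((Quotient.exact hs') _ hχ).2 h).1 t' hR)

lemma filt_serial (L : List (LGA Agt)) (h : M.serial) : (filtAS M L).serial := by
  intro i x
  obtain ⟨s, rfl⟩ := Quotient.exists_rep x
  obtain ⟨t, hR⟩ := h i s
  exact ⟨Quotient.mk (filtEqv M L) t, s, t, rfl, rfl, hR⟩

lemma filt_finite (L : List (LGA Agt)) : Finite (filtAS M L).S := by
  have h1 : Finite {χ : LGA Agt // χ ∈ L} := (L.finite_toSet).to_subtype
  have h2 : Finite ({χ : LGA Agt // χ ∈ L} → Prop) := Pi.finite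
  refine Finite.of_injective
    (Quotient.lift (fun s (χ : {χ : LGA Agt // χ ∈ L}) => M.sat s χ.val)
      (fun a b hab => funext fun χ => propext (hab χ.val χ.prop)) :
      (filtAS M L).S → ({χ : LGA Agt // χ ∈ L} → Prop)) ?_
  intro x y hxy
  induction x using Quotient.ind
  induction y using Quotient.ind
  exact Quotient.sound fun χ hχ => iff_of_eq (congrFun hxy ⟨χ, hχ⟩)

/- ### Subformulas of LGA formulas -/

/-- The list of subformulas of an LGA formula. -/
def subLGA : LGA Agt → List (LGA Agt)
  | .atom p => [.atom p]
  | .neg χ => .neg χ :: subLGA χ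
  | .and χ ψ => .and χ ψ :: (subLGA χ ++ subLGA ψ)
  | .bel i χ => .bel i χ :: subLGA χ
  | .aware i χ => .aware i χ :: subLGA χ
  | .expk i χ => .expk i χ :: subLGA χ

lemma mem_subLGA_self (χ : LGA Agt) : χ ∈ subLGA χ := by
  cases χ <;> simp [subLGA]

lemma subLGA_trans : ∀ {χ ψ : LGA Agt}, ψ ∈ subLGA χ →
    ∀ {ρ : LGA Agt}, ρ ∈ subLGA ψ → ρ ∈ subLGA χ := by
  intro χ
  induction χ with
  | atom p =>
    intro ψ h ρ hρ
    simp [subLGA] at h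
    subst h; exact hρ
  | neg χ ih =>
    intro ψ h ρ hρ
    rcases List.mem_cons.1 h with rfl | h
    · exact hρ
    · exact List.mem_cons_of_mem _ (ih h hρ)
  | and χ₁ χ₂ ih1 ih2 =>
    intro ψ h ρ hρ
    rcases List.mem_cons.1 h with rfl | h
    · exact hρ
    · rcases List.mem_append.1 h with h | h
      · exact List.mem_cons_of_mem _ (List.mem_append.2 (Or.inl (ih1 h hρ)))
      · exact List.mem_cons_of_mem _ (List.mem_append.2 (Or.inr (ih2 h hρ)))
  | bel i χ ih =>
    intro ψ h ρ hρ
    rcases List.mem_cons.1 h with rfl | h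
    · exact hρ
    · exact List.mem_cons_of_mem _ (ih h hρ)
  | aware i χ ih =>
    intro ψ h ρ hρ
    rcases List.mem_cons.1 h with rfl | h
    · exact hρ
    · exact List.mem_cons_of_mem _ (ih h hρ)
  | expk i χ ih =>
    intro ψ h ρ hρ
    rcases List.mem_cons.1 h with rfl | h
    · exact hρ
    · exact List.mem_cons_of_mem _ (ih h hρ)

lemma subLGA_neg {χ0 χ : LGA Agt} (h : LGA.neg χ ∈ subLGA χ0) : χ ∈ subLGA χ0 :=
  subLGA_trans h (List.mem_cons_of_mem _ (mem_subLGA_self χ))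

lemma subLGA_and {χ0 χ ψ : LGA Agt} (h : LGA.and χ ψ ∈ subLGA χ0) :
    χ ∈ subLGA χ0 ∧ ψ ∈ subLGA χ0 :=
  ⟨subLGA_trans h (List.mem_cons_of_mem _ (List.mem_append.2 (Or.inl (mem_subLGA_self χ)))),
   subLGA_trans h (List.mem_cons_of_mem _ (List.mem_append.2 (Or.inr (mem_subLGA_self ψ))))⟩

lemma subLGA_bel {χ0 : LGA Agt} {i : Agt} {χ : LGA Agt}
    (h : LGA.bel i χ ∈ subLGA χ0) : χ ∈ subLGA χ0 :=
  subLGA_trans h (List.mem_cons_of_mem _ (mem_subLGA_self χ))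

lemma subLGA_expk {χ0 : LGA Agt} {i : Agt} {χ : LGA Agt}
    (h : LGA.expk i χ ∈ subLGA χ0) : χ ∈ subLGA χ0 :=
  subLGA_trans h (List.mem_cons_of_mem _ (mem_subLGA_self χ))

end EmbeddingAux

end LDAPaper

namespace LDAPaper

/-- A formula `φ ∈ L` is satisfiable for the class of consistent multi-agent belief
models iff `tr(φ)` is satisfiable for the class of serial awareness structures. -/
theorem embedding_cmab_awareness (Agt : Type) [Fintype Agt] (φ : Frm Agt)
    (hφ : φ.isL) :
    (∃ (b : MABase Agt) (Cxt : Set (MABase Agt)), isCMAB b Cxt ∧ msat Cxt b φ) ↔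
      (∃ M : AwStruct Agt, M.serial ∧ ∃ s : M.S, M.sat s (tr φ)) := by
  constructor
  · rintro ⟨b, Cxt, ⟨hwf, hser⟩, hsat⟩
    refine ⟨fwdAS b Cxt, ?_, ⟨b, Set.mem_insert _ _⟩, ?_⟩
    · intro i s
      obtain ⟨b'', hb'', hR⟩ := hser i s.val s.prop
      exact ⟨⟨b'', Set.mem_insert_of_mem _ hb''⟩, hb'', hR⟩
    · exact (fwd_truth b Cxt φ hφ ⟨b, Set.mem_insert _ _⟩).2 hsat
  · rintro ⟨M, hser, s, hsat⟩
    -- Stage 1: filtrate through the subformulas of `tr φ` to get a finite structure.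
    set L := subLGA (tr φ) with hLdef
    have hFsat : (filtAS M L).sat (Quotient.mk (filtEqv M L) s) (tr φ) :=
      (filt_truth M L (fun χ h => subLGA_neg h) (fun χ ψ h => subLGA_and h)
        (fun i χ h => subLGA_bel h) (fun i χ h => subLGA_expk h) (tr φ)
        (mem_subLGA_self _) s).2 hsat
    have hFser : (filtAS M L).serial := filt_serial M L hser
    have hFfin : Finite (filtAS M L).S := filt_finite M L
    -- Stage 2: tag the finitely many states by fresh atoms.
    obtain ⟨f, hf⟩ := Countable.exists_injective_nat (filtAS M L).S
    obtain ⟨N, hN⟩ := (atomsOf_finite φ).bddAbove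
    set tag : (filtAS M L).S → ℕ := fun x => f x + N + 1 with htagdef
    have htag : Function.Injective tag := by
      intro a b h
      apply hf
      simpa [htagdef] using h
    have hfresh : ∀ x, tag x ∉ φ.atomsOf := by
      intro x hx
      have h1 : tag x ≤ N := hN hx
      have h2 : tag x = f x + N + 1 := rfl
      omega
    exact ⟨mkBase (filtAS M L) tag φ.atomsOf (Quotient.mk (filtEqv M L) s),
      Set.range (mkBase (filtAS M L) tag φ.atomsOf),
      bwd_cmab (filtAS M L) tag φ.atomsOf htag hfresh hFser _,
      (bwd_truth (filtAS M L) tag φ.atomsOf htag hfresh hφ (fun _ h => h)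
        (Quotient.mk (filtEqv M L) s)).2 hFsat⟩

end LDAPaper
end

section
/- If a formula φ ∈ L is satisfiable for the class of notional doxastic models, then φ is satisfiable for the class of non-redundant notional doxastic models, where an NDM M = (W,D,N,V) is non-redundant iff there are no two distinct worlds w, v ∈ W such that {p : w ∈ V(p)} = {p : v ∈ V(p)} and D(i,w) = D(i,v) for all i ∈ Agt. -/
namespace LDAPaper

/-- An NDM is non-redundant iff no two distinct worlds agree both on their true
atoms and on all belief bases. -/
def nonRedundant {Agt : Type} (M : PreNDM Agt) : Prop :=
  ∀ w v : M.W, {p : ℕ | w ∈ M.V p} = {p : ℕ | v ∈ M.V p} →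
    (∀ i : Agt, M.D i w = M.D i v) → w = v

/-- Setoid identifying worlds with the same true atoms and the same belief bases. -/
def redSetoid {Agt : Type} (M : PreNDM Agt) : Setoid M.W where
  r w v := (∀ p, w ∈ M.V p ↔ v ∈ M.V p) ∧ ∀ i, M.D i w = M.D i v
  iseqv := ⟨fun _ => ⟨fun _ => Iff.rfl, fun _ => rfl⟩,
    fun h => ⟨fun p => (h.1 p).symm, fun i => (h.2 i).symm⟩,
    fun h1 h2 => ⟨fun p => (h1.1 p).trans (h2.1 p), fun i => (h1.2 i).trans (h2.2 i)⟩⟩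

/-- Doxastic function on the quotient. -/
def redD {Agt : Type} (M : PreNDM Agt) (i : Agt) : Quotient (redSetoid M) → Set (Frm Agt) :=
  Quotient.lift (M.D i) (fun a b (h : (redSetoid M).r a b) => h.2 i)

/-- The quotient (non-redundant) model. -/
def redModel {Agt : Type} (M : PreNDM Agt) : PreNDM Agt where
  W := Quotient (redSetoid M)
  D := redD M
  N := fun i x => {y | ∃ v : M.W, Quotient.mk (redSetoid M) v = y ∧
        ∀ α ∈ redD M i x, M.sat v α}
  V := fun p => {x | Quotient.lift (fun w => w ∈ M.V p) (fun a b (h : (redSetoid M).r a b) => propext (h.1 p)) x}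

lemma sat0_red {Agt : Type} (M : PreNDM Agt) : ∀ α : Frm Agt, α.isL0 → ∀ w : M.W,
    ((redModel M).sat (Quotient.mk (redSetoid M) w) α ↔ M.sat w α)
  | .atom p, _, w => Iff.rfl
  | .neg α, h, w => not_congr (sat0_red M α h w)
  | .and α β, h, w => and_congr (sat0_red M α h.1 w) (sat0_red M β h.2 w)
  | .expbel i α, _, w => Iff.rfl
  | .impbel _ _, h, _ => h.elim

lemma sat_red {Agt : Type} (M : PreNDM Agt)
    (hC1 : ∀ i w, M.N i w = {v | ∀ α ∈ M.D i w, M.sat v α}) :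
    ∀ φ : Frm Agt, ∀ w : M.W,
    ((redModel M).sat (Quotient.mk (redSetoid M) w) φ ↔ M.sat w φ)
  | .atom p, w => Iff.rfl
  | .neg φ, w => not_congr (sat_red M hC1 φ w)
  | .and φ ψ, w => and_congr (sat_red M hC1 φ w) (sat_red M hC1 ψ w)
  | .expbel i α, w => Iff.rfl
  | .impbel i φ, w => by
    constructor
    · intro h v hv
      have hv' : ∀ α ∈ M.D i w, M.sat v α := by
        rw [hC1] at hv; exact hv
      exact (sat_red M hC1 φ v).1
        (h (Quotient.mk (redSetoid M) v) ⟨v, rfl, hv'⟩)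
    · intro h y hy
      obtain ⟨v, rfl, hv⟩ := hy
      refine (sat_red M hC1 φ v).2 (h v ?_)
      rw [hC1]; exact hv

/-- If `φ ∈ L` is satisfiable for the class of NDMs, then `φ` is satisfiable for the
class of non-redundant NDMs. -/
theorem ndm_sat_to_nonredundant (Agt : Type) [Fintype Agt] (φ : Frm Agt) (hφ : φ.isL)
    (h : ∃ M : PreNDM Agt, isNDM M ∧ ∃ w : M.W, M.sat w φ) :
    ∃ M : PreNDM Agt, isNDM M ∧ nonRedundant M ∧ ∃ w : M.W, M.sat w φ := by
  obtain ⟨M, ⟨hL0, hC1, hC2⟩, w, hw⟩ := h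
  refine ⟨redModel M, ⟨?_, ?_, ?_⟩, ?_, ⟨Quotient.mk (redSetoid M) w,
    (sat_red M hC1 φ w).2 hw⟩⟩
  · intro i x
    induction x using Quotient.ind with
    | _ v => exact hL0 i v
  · intro i x
    induction x using Quotient.ind with
    | _ u =>
      ext y
      induction y using Quotient.ind with
      | _ v =>
        constructor
        · rintro ⟨v', he, hv'⟩ α hα
          rw [← he]
          exact (sat0_red M α (hL0 i u α hα) v').2 (hv' α hα)
        · intro hy
          exact ⟨v, rfl, fun α hα => (sat0_red M α (hL0 i u α hα) v).1 (hy α hα)⟩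
  · intro i x
    induction x using Quotient.ind with
    | _ u =>
      obtain ⟨v, hv⟩ := hC2 i u
      have hv' : ∀ α ∈ M.D i u, M.sat v α := by
        rw [hC1] at hv; exact hv
      exact ⟨Quotient.mk (redSetoid M) v, v, rfl, hv'⟩
  · intro x y hV hD
    induction x using Quotient.ind with
    | _ u =>
      induction y using Quotient.ind with
      | _ v =>
        refine Quotient.sound ⟨fun p => ?_, fun i => hD i⟩
        have := Set.ext_iff.1 hV p
        exact this

end LDAPaper
end
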